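/- arXiv:2501.13728 — 2 statements merged into one kernel-verified Lean document; each statement's English description precedes it below -/
import Mathlib

section
/- If 0 < bδ < c - δ, then the determinant of the Jacobian matrix of (P,Q) at P₂ = (bδ/(c-δ), -bc(δ+bδ-c)/(c-δ)²), which equals -b²cδ(bδ + δ - c)/(c-δ)², is strictly positive. -/
/-- If 0 < bδ < c - δ, then the determinant of the Jacobian of (P,Q) at P₂,
which equals -b²cδ(bδ + δ - c)/(c-δ)², is strictly positive. -/
theorem stmt4 (b c δ : ℝ) (hb : 0 < b) (hc : 0 < c) (hδ : 0 < δ)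
    (h1 : 0 < b*δ) (h2 : b*δ < c - δ)
    (P Q : ℝ → ℝ → ℝ)
    (hP : ∀ x y, P x y = x * (-x^2 + (1-b)*x - y + b))
    (hQ : ∀ x y, Q x y = y * ((c-δ)*x - δ*b))
    (x₂ y₂ : ℝ) (hx₂ : x₂ = b*δ/(c-δ)) (hy₂ : y₂ = -b*c*(δ + b*δ - c)/(c-δ)^2)
    (J : Matrix (Fin 2) (Fin 2) ℝ)
    (hJ : J = !![deriv (fun x => P x y₂) x₂, deriv (fun y => P x₂ y) y₂;
                 deriv (fun x => Q x y₂) x₂, deriv (fun y => Q x₂ y) y₂]) :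
    J.det = -b^2*c*δ*(b*δ + δ - c)/(c-δ)^2 ∧ 0 < J.det := by
  have hcd : 0 < c - δ := lt_trans h1 h2
  have hcd' : c - δ ≠ 0 := ne_of_gt hcd
  have hQ' : (fun x y => Q x y) = fun x y => y * ((c-δ)*x - δ*b) := by
    funext x y; exact hQ x y
  have hd1 : deriv (fun x => P x y₂) x₂ = -3*x₂^2 + 2*(1-b)*x₂ - y₂ + b := by
    have h : HasDerivAt (fun x : ℝ => x * (-x^2 + (1-b)*x - y₂ + b))
        (-3*x₂^2 + 2*(1-b)*x₂ - y₂ + b) x₂ := by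
      have : HasDerivAt (fun x : ℝ => x * (-x^2 + (1-b)*x - y₂ + b)) _ x₂ := (hasDerivAt_id x₂).mul
        ((((hasDerivAt_pow 2 x₂).neg.add ((hasDerivAt_id x₂).const_mul (1-b))).sub_const y₂).add_const b)
      convert this using 1; simp [id]; ring
    calc deriv (fun x => P x y₂) x₂ = deriv (fun x : ℝ => x * (-x^2 + (1-b)*x - y₂ + b)) x₂ := by
          congr 1; funext x; exact hP x y₂
      _ = _ := h.deriv
  have hd2 : deriv (fun y => P x₂ y) y₂ = -x₂ := by
    have h : HasDerivAt (fun y : ℝ => x₂ * (-x₂^2 + (1-b)*x₂ - y + b)) (-x₂) y₂ := by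
      have : HasDerivAt (fun y : ℝ => x₂ * (-x₂^2 + (1-b)*x₂ - y + b)) _ y₂ := (((hasDerivAt_id y₂).neg.const_add (-x₂^2 + (1-b)*x₂)).add_const b).const_mul x₂
      convert this using 1
      ring
    calc deriv (fun y => P x₂ y) y₂ = deriv (fun y : ℝ => x₂ * (-x₂^2 + (1-b)*x₂ - y + b)) y₂ := by
          congr 1; funext y; exact hP x₂ y
      _ = _ := h.deriv
  have hd3 : deriv (fun x => Q x y₂) x₂ = y₂ * (c-δ) := by
    have h : HasDerivAt (fun x : ℝ => y₂ * ((c-δ)*x - δ*b)) (y₂ * (c-δ)) x₂ := by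
      have : HasDerivAt (fun x : ℝ => y₂ * ((c-δ)*x - δ*b)) _ x₂ := (((hasDerivAt_id x₂).const_mul (c-δ)).sub_const (δ*b)).const_mul y₂
      convert this using 1; ring
    calc deriv (fun x => Q x y₂) x₂ = deriv (fun x : ℝ => y₂ * ((c-δ)*x - δ*b)) x₂ := by
          congr 1; funext x; exact hQ x y₂
      _ = _ := h.deriv
  have hd4 : deriv (fun y => Q x₂ y) y₂ = (c-δ)*x₂ - δ*b := by
    have h : HasDerivAt (fun y : ℝ => y * ((c-δ)*x₂ - δ*b)) ((c-δ)*x₂ - δ*b) y₂ := by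
      have : HasDerivAt (fun y : ℝ => y * ((c-δ)*x₂ - δ*b)) _ y₂ := (hasDerivAt_id y₂).mul_const ((c-δ)*x₂ - δ*b)
      convert this using 1; ring
    calc deriv (fun y => Q x₂ y) y₂ = deriv (fun y : ℝ => y * ((c-δ)*x₂ - δ*b)) y₂ := by
          congr 1; funext y; exact hQ x₂ y
      _ = _ := h.deriv
  have hdet : J.det = -b^2*c*δ*(b*δ + δ - c)/(c-δ)^2 := by
    rw [hJ, Matrix.det_fin_two_of, hd1, hd2, hd3, hd4, hx₂, hy₂]
    field_simp
    ring
  refine ⟨hdet, ?_⟩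
  rw [hdet]
  have hnum : 0 < -b^2*c*δ*(b*δ + δ - c) := by nlinarith [mul_pos (mul_pos (mul_pos (pow_pos hb 2) hc) hδ) (sub_pos.2 h2)]
  exact div_pos hnum (by positivity)
end

section
/- If c > δ > 0 and b = (c-δ)/(c+δ), then the trace of the Jacobian of the system ẋ = x(-x²+(1-b)x-y+b), ẏ = y((c-δ)x - δb) at the point (δ/(c+δ), c²/(c+δ)²) is zero, and the determinant is strictly positive, so the eigenvalues are purely imaginary and nonzero. -/
/-!
At `(x₂, y₂)` the predator equation `(c - δ) x = δ b` and the prey nullcline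
`-x² + (1 - b) x - y + b = 0` both hold, and `x₂ = (1 - b) / 2` is the vertex of that nullcline,
so both diagonal entries of the Jacobian vanish: it is `!![0, -x₂; (c - δ) y₂, 0]`. Its trace is
zero and its determinant `(c - δ) x₂ y₂` is positive, so every complex eigenvalue `z` satisfies
`z² = -det < 0`, i.e. `z` is purely imaginary and nonzero.
-/

open Matrix

theorem Matrix.sq_sub_trace_mul_add_det_eq_zero_of_hasEigenvalue {R : Type*} [CommRing R]
    [IsDomain R] (A : Matrix (Fin 2) (Fin 2) R) {μ : R}
    (h : Module.End.HasEigenvalue (toLin' A) μ) : μ ^ 2 - A.trace * μ + A.det = 0 := by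
  rw [Module.End.hasEigenvalue_iff_isRoot_charpoly, charpoly_toLin', charpoly_fin_two] at h
  simpa using h

theorem Complex.re_eq_zero_and_ne_zero_of_sq_eq_neg {z : ℂ} {d : ℝ} (hd : 0 < d)
    (h : z ^ 2 = -d) : z.re = 0 ∧ z ≠ 0 := by
  have hre : z.re ^ 2 - z.im ^ 2 = -d := by simpa [sq] using congrArg Complex.re h
  have him : z.re * z.im = 0 := by
    have := congrArg Complex.im h
    simp only [sq, Complex.mul_im, Complex.neg_im, Complex.ofReal_im, neg_zero] at this
    linarith
  refine ⟨?_, ?_⟩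
  · rcases mul_eq_zero.mp him with h0 | h0
    · exact h0
    · nlinarith [sq_nonneg z.re]
  · rintro rfl
    simp at h
    linarith

theorem Matrix.re_eq_zero_and_ne_zero_of_hasEigenvalue_map_ofReal
    (A : Matrix (Fin 2) (Fin 2) ℝ) (htr : A.trace = 0) (hdet : 0 < A.det) {z : ℂ}
    (hz : Module.End.HasEigenvalue (toLin' (A.map Complex.ofReal)) z) :
    z.re = 0 ∧ z ≠ 0 := by
  have hchar := sq_sub_trace_mul_add_det_eq_zero_of_hasEigenvalue _ hz
  have htr' : (A.map Complex.ofReal).trace = 0 := by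
    simpa [trace_fin_two] using congrArg Complex.ofReal htr
  have hdet' : (A.map Complex.ofReal).det = A.det := (Complex.ofRealHom.map_det A).symm
  rw [htr', hdet'] at hchar
  exact Complex.re_eq_zero_and_ne_zero_of_sq_eq_neg hdet
    (by simpa using eq_neg_of_add_eq_zero_left hchar)

section PredatorPrey

variable (b c δ : ℝ)

theorem deriv_prey_fst (x y : ℝ) :
    deriv (fun x => x * (-x ^ 2 + (1 - b) * x - y + b)) x = -3 * x ^ 2 + 2 * (1 - b) * x - y + b := by
  have h : HasDerivAt (fun x => x * (-x ^ 2 + (1 - b) * x - y + b))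
      (1 * (-x ^ 2 + (1 - b) * x - y + b) + x * (-(2 * x) + (1 - b))) x := by
    refine (hasDerivAt_id' x).mul ((((hasDerivAt_pow 2 x).neg.add
      ((hasDerivAt_id' x).const_mul (1 - b))).sub_const y).add_const b |>.congr_deriv ?_)
    simp
  rw [h.deriv]
  ring

theorem deriv_prey_snd (x y : ℝ) :
    deriv (fun y => x * (-x ^ 2 + (1 - b) * x - y + b)) y = -x := by
  simp

theorem deriv_predator_fst (x y : ℝ) :
    deriv (fun x => y * ((c - δ) * x - δ * b)) x = y * (c - δ) := by
  simp

theorem deriv_predator_snd (x y : ℝ) :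
    deriv (fun y => y * ((c - δ) * x - δ * b)) y = (c - δ) * x - δ * b := by
  simp

end PredatorPrey

/-- If c > δ > 0 and b = (c-δ)/(c+δ), then the trace of the Jacobian at
(δ/(c+δ), c²/(c+δ)²) is zero and the determinant is strictly positive, so
the eigenvalues are purely imaginary and nonzero. -/
theorem stmt11 (c δ : ℝ) (hδ : 0 < δ) (hcδ : δ < c)
    (b : ℝ) (hb : b = (c-δ)/(c+δ))
    (P Q : ℝ → ℝ → ℝ)
    (hP : ∀ x y, P x y = x * (-x^2 + (1-b)*x - y + b))
    (hQ : ∀ x y, Q x y = y * ((c-δ)*x - δ*b))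
    (x₂ y₂ : ℝ) (hx₂ : x₂ = δ/(c+δ)) (hy₂ : y₂ = c^2/(c+δ)^2)
    (J : Matrix (Fin 2) (Fin 2) ℝ)
    (hJ : J = !![deriv (fun x => P x y₂) x₂, deriv (fun y => P x₂ y) y₂;
                 deriv (fun x => Q x y₂) x₂, deriv (fun y => Q x₂ y) y₂]) :
    J.trace = 0 ∧ 0 < J.det ∧
    ∀ z : ℂ, Module.End.HasEigenvalue
        (Matrix.toLin' (J.map (Complex.ofReal : ℝ → ℂ))) z →
      z.re = 0 ∧ z ≠ 0 := by
  obtain rfl : P = _ := funext₂ hP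
  obtain rfl : Q = _ := funext₂ hQ
  have hc : 0 < c := hδ.trans hcδ
  have hprey : -3 * x₂ ^ 2 + 2 * (1 - b) * x₂ - y₂ + b = 0 := by
    subst hb hx₂ hy₂; field_simp; ring
  have hpredator : (c - δ) * x₂ - δ * b = 0 := by
    subst hb hx₂; field_simp; ring
  have hJ' : J = !![0, -x₂; y₂ * (c - δ), 0] := by
    rw [hJ, deriv_prey_fst, deriv_prey_snd, deriv_predator_fst, deriv_predator_snd, hprey,
      hpredator]
  have htr : J.trace = 0 := by simp [hJ', trace_fin_two]
  have hdet : 0 < J.det := by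
    have hx : 0 < x₂ := by rw [hx₂]; positivity
    have hy : 0 < y₂ := by rw [hy₂]; positivity
    have hcδ' : 0 < c - δ := by linarith
    rw [hJ', det_fin_two_of]
    nlinarith [mul_pos hx (mul_pos hy hcδ')]
  exact ⟨htr, hdet, fun z hz => J.re_eq_zero_and_ne_zero_of_hasEigenvalue_map_ofReal htr hdet hz⟩
end
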